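/- For the three-web on the domain {(x¹,x²,y¹,y²) ∈ ℝ⁴ : x¹y² ≠ −1} given by f¹ = x¹ + y¹ + (1/2)(x¹)²y², f² = x² + y² + (1/2)x¹(y²)², with Δ := 1 + x¹y², the connection coefficients are Γ¹₁₂ = −x¹/Δ², Γ²₁₂ = −y²/Δ², all other Γ^i_{jk} = 0, and the torsion covector is a₁ = −y²/Δ², a₂ = x¹/Δ². -/

import Mathlib

noncomputable section

open Matrix

/-- Partial derivative of `g` with respect to the `j`-th coordinate at the point `x`. -/
def pd (j : Fin 2) (g : (Fin 2 → ℝ) → ℝ) (x : Fin 2 → ℝ) : ℝ :=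
  deriv (fun t => g (Function.update x j t)) (x j)

variable (f : Fin 2 → (Fin 2 → ℝ) → (Fin 2 → ℝ) → ℝ)

/-- Jacobian matrix `f̄ = (∂fⁱ/∂xʲ)` with respect to the first group of variables. -/
def fbar (x y : Fin 2 → ℝ) : Matrix (Fin 2) (Fin 2) ℝ :=
  Matrix.of fun i j => pd j (fun x' => f i x' y) x

/-- Jacobian matrix `f̃ = (∂fⁱ/∂yʲ)` with respect to the second group of variables. -/
def ftil (x y : Fin 2 → ℝ) : Matrix (Fin 2) (Fin 2) ℝ :=
  Matrix.of fun i j => pd j (fun y' => f i x y') y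

/-- Mixed second partial derivative `∂²fⁱ/∂xˡ∂yᵐ`. -/
def d2 (i l m : Fin 2) (x y : Fin 2 → ℝ) : ℝ :=
  pd m (fun y' => pd l (fun x' => f i x' y') x) y

/-- Connection coefficients
`Γⁱⱼₖ = −∑_{l,m} (∂²fⁱ/∂xˡ∂yᵐ) ḡˡⱼ g̃ᵐₖ`, where `ḡ = f̄⁻¹`, `g̃ = f̃⁻¹`. -/
def Gam (i j k : Fin 2) (x y : Fin 2 → ℝ) : ℝ :=
  - ∑ l : Fin 2, ∑ m : Fin 2,
      d2 f i l m x y * (fbar f x y)⁻¹ l j * (ftil f x y)⁻¹ m k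

/-- Torsion covector `aⱼ = ∑ₖ (Γᵏⱼₖ − Γᵏₖⱼ)`. -/
def aCov (j : Fin 2) (x y : Fin 2 → ℝ) : ℝ :=
  ∑ k : Fin 2, (Gam f k j k x y - Gam f k k j x y)

/-- Covariant derivative `p_{ik} = ∑ₘ (∂aᵢ/∂xᵐ) ḡᵐₖ − ∑ⱼ aⱼ Γʲₖᵢ`. -/
def pCov (i k : Fin 2) (x y : Fin 2 → ℝ) : ℝ :=
  (∑ m : Fin 2, pd m (fun x' => aCov f i x' y) x * (fbar f x y)⁻¹ m k)
    - ∑ j : Fin 2, aCov f j x y * Gam f j k i x y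

/-- Covariant derivative `q_{ik} = ∑ₘ (∂aᵢ/∂yᵐ) g̃ᵐₖ − ∑ⱼ aⱼ Γʲᵢₖ`. -/
def qCov (i k : Fin 2) (x y : Fin 2 → ℝ) : ℝ :=
  (∑ m : Fin 2, pd m (fun y' => aCov f i x y') y * (ftil f x y)⁻¹ m k)
    - ∑ j : Fin 2, aCov f j x y * Gam f j i k x y

/-- Isoclinicity invariant `p = (p₁₂ − p₂₁)/2`. -/
def pIso (x y : Fin 2 → ℝ) : ℝ := (pCov f 0 1 x y - pCov f 1 0 x y) / 2

/-- Isoclinicity invariant `q = (q₁₂ − q₂₁)/2`. -/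
def qIso (x y : Fin 2 → ℝ) : ℝ := (qCov f 0 1 x y - qCov f 1 0 x y) / 2


/-- The web `f¹ = x¹ + y¹ + (1/2)(x¹)²y²`, `f² = x² + y² + (1/2)x¹(y²)²`.
(Indices: `x 0 ↦ x¹`, `x 1 ↦ x²`, `y 0 ↦ y¹`, `y 1 ↦ y²`.) -/
noncomputable def webF : Fin 2 → (Fin 2 → ℝ) → (Fin 2 → ℝ) → ℝ :=
  ![fun x y => x 0 + y 0 + (1/2) * (x 0)^2 * y 1,
    fun x y => x 1 + y 1 + (1/2) * x 0 * (y 1)^2]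


/-! The Jacobians `f̄ = !![Δ, 0; (y²)²/2, 1]` and `f̃ = !![1, (x¹)²/2; 0, Δ]` are triangular with
determinant `Δ`, and the only nonzero mixed second derivatives are `∂²fⁱ/∂x¹∂y² = (x¹, y²)ⁱ`.
Hence `Γⁱⱼₖ = -(x¹, y²)ⁱ ḡ¹ⱼ g̃²ₖ`, and the rows `ḡ¹ = (1/Δ, 0)`, `g̃² = (0, 1/Δ)` of the
adjugate formula for the inverses leave only `Γⁱ₁₂ = -(x¹, y²)ⁱ / Δ²`. -/

theorem Matrix.inv_fin_two_of {K : Type*} [Field K] (a b c d : K) :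
    (!![a, b; c, d])⁻¹ = (a * d - b * c)⁻¹ • !![d, -b; -c, a] := by
  rw [Matrix.inv_def, Ring.inverse_eq_inv, Matrix.det_fin_two_of, Matrix.adjugate_fin_two_of]

theorem d2_eq_pd_fbar (i l m : Fin 2) (x y : Fin 2 → ℝ) :
    d2 f i l m x y = pd m (fun y' => fbar f x y' i l) y :=
  rfl

section webF

variable (x y : Fin 2 → ℝ)

theorem fbar_webF : fbar webF x y = !![1 + x 0 * y 1, 0; (y 1) ^ 2 / 2, 1] := by
  ext i j
  fin_cases i <;> fin_cases j <;>
    simp (disch := fun_prop) [fbar, pd, webF, Function.update_apply, -mul_eq_mul_right_iff] <;>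
    ring

theorem ftil_webF : ftil webF x y = !![1, (x 0) ^ 2 / 2; 0, 1 + x 0 * y 1] := by
  ext i j
  fin_cases i <;> fin_cases j <;>
    simp (disch := fun_prop) [ftil, pd, webF, Function.update_apply] <;> ring

theorem d2_webF (i l m : Fin 2) :
    d2 webF i l m x y = if l = 0 ∧ m = 1 then ![x 0, y 1] i else 0 := by
  simp_rw [d2_eq_pd_fbar, fbar_webF]
  fin_cases i <;> fin_cases l <;> fin_cases m <;>
    simp (disch := fun_prop) [pd, Function.update_apply, mul_div_cancel_left₀ _ (two_ne_zero' ℝ)]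

theorem Gam_webF (i j k : Fin 2) :
    Gam webF i j k x y =
      if j = 0 ∧ k = 1 then -![x 0, y 1] i / (1 + x 0 * y 1) ^ 2 else 0 := by
  rw [Gam, fbar_webF, ftil_webF, Matrix.inv_fin_two_of, Matrix.inv_fin_two_of]
  fin_cases i <;> fin_cases j <;> fin_cases k
  all_goals simp [d2_webF, Fin.sum_univ_two]
  -- so that `ring` sees `Δ⁻¹` as an atom instead of inverting the expanded square `Δ ^ 2`
  all_goals generalize 1 + x 0 * y 1 = Δ
  all_goals ring

theorem aCov_webF (j : Fin 2) :
    aCov webF j x y = ![-(y 1), x 0] j / (1 + x 0 * y 1) ^ 2 := by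
  fin_cases j <;> simp [aCov, Gam_webF, neg_div]

end webF

theorem webF_connection_and_torsion_general (x y : Fin 2 → ℝ)
    (Δ : ℝ) (hΔ : Δ = 1 + x 0 * y 1) :
    Gam webF 0 0 1 x y = -(x 0) / Δ^2 ∧
    Gam webF 1 0 1 x y = -(y 1) / Δ^2 ∧
    Gam webF 0 0 0 x y = 0 ∧ Gam webF 0 1 0 x y = 0 ∧ Gam webF 0 1 1 x y = 0 ∧
    Gam webF 1 0 0 x y = 0 ∧ Gam webF 1 1 0 x y = 0 ∧ Gam webF 1 1 1 x y = 0 ∧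
    aCov webF 0 x y = -(y 1) / Δ^2 ∧
    aCov webF 1 x y = x 0 / Δ^2 := by
  subst hΔ
  simp [Gam_webF, aCov_webF]

/-- For the web `webF` on the domain `x¹y² ≠ −1`, with `Δ = 1 + x¹y²`, the
connection coefficients are `Γ¹₁₂ = −x¹/Δ²`, `Γ²₁₂ = −y²/Δ²`, all other
`Γ^i_{jk} = 0`, and the torsion covector is `a₁ = −y²/Δ²`, `a₂ = x¹/Δ²`. -/
theorem webF_connection_and_torsion (x y : Fin 2 → ℝ)
    (h : x 0 * y 1 ≠ -1) (Δ : ℝ) (hΔ : Δ = 1 + x 0 * y 1) :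
    Gam webF 0 0 1 x y = -(x 0) / Δ^2 ∧
    Gam webF 1 0 1 x y = -(y 1) / Δ^2 ∧
    Gam webF 0 0 0 x y = 0 ∧ Gam webF 0 1 0 x y = 0 ∧ Gam webF 0 1 1 x y = 0 ∧
    Gam webF 1 0 0 x y = 0 ∧ Gam webF 1 1 0 x y = 0 ∧ Gam webF 1 1 1 x y = 0 ∧
    aCov webF 0 x y = -(y 1) / Δ^2 ∧
    aCov webF 1 x y = x 0 / Δ^2 :=
  webF_connection_and_torsion_general x y Δ hΔ

end
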